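/- arXiv:2602.17894 — 2 statements merged into one kernel-verified Lean document; each statement's English description precedes it below -/
import Mathlib

section
/- For every C ≥ 3, the integral ∫_{0}^{C−3} (φ(x+C) − φ(x−C))² / (Φ(x+C) − Φ(x−C)) dx is at most 1/(1.994·√π). -/
open MeasureTheory

/-- The standard normal density. -/
noncomputable def gaussPdf (x : ℝ) : ℝ :=
  (Real.sqrt (2 * Real.pi))⁻¹ * Real.exp (-(x ^ 2) / 2)

/-- The standard normal CDF. -/
noncomputable def gaussCdf (x : ℝ) : ℝ :=
  ∫ t in Set.Iic x, gaussPdf t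

open Real Set Filter

lemma gaussPdf_eq (x : ℝ) : gaussPdf x = (Real.sqrt (2 * Real.pi))⁻¹ * Real.exp (-(1/2) * x ^ 2) := by
  unfold gaussPdf; ring_nf
lemma gaussPdf_nonneg (x : ℝ) : 0 ≤ gaussPdf x := by unfold gaussPdf; positivity
lemma integrable_gaussPdf : Integrable gaussPdf := by
  have h := (integrable_exp_neg_mul_sq (by norm_num : (0:ℝ) < 1/2)).const_mul
    (Real.sqrt (2 * Real.pi))⁻¹
  exact h.congr (Filter.Eventually.of_forall fun x => (gaussPdf_eq x).symm)

lemma integrable_mul_gaussPdf : Integrable (fun t => t * gaussPdf t) := by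
  have h := (integrable_mul_exp_neg_mul_sq (by norm_num : (0:ℝ) < 1/2)).const_mul
    (Real.sqrt (2 * Real.pi))⁻¹
  refine h.congr (Filter.Eventually.of_forall fun x => ?_)
  simp only [gaussPdf_eq]; ring

lemma integral_mul_tail : ∫ t in Set.Ioi (3:ℝ), t * gaussPdf t =
    (Real.sqrt (2 * Real.pi))⁻¹ * Real.exp (-(9:ℝ)/2) := by
  have hderiv : ∀ x ∈ Set.Ioi (3:ℝ),
      HasDerivAt (fun t => -gaussPdf t) (x * gaussPdf x) x := by
    intro x _
    have h : HasDerivAt (fun t : ℝ => -(t^2)/2) (-x) x := by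
      have := ((hasDerivAt_pow 2 x).neg.div_const 2)
      simpa using this.congr_deriv (by ring)
    have h2 := (h.exp.const_mul (Real.sqrt (2 * Real.pi))⁻¹).neg
    refine h2.congr_deriv ?_
    unfold gaussPdf; ring
  have htend : Tendsto (fun t => -gaussPdf t) atTop (nhds 0) := by
    rw [show (0:ℝ) = -((Real.sqrt (2 * Real.pi))⁻¹ * 0) by ring]
    apply Tendsto.neg
    apply Tendsto.const_mul
    apply Real.tendsto_exp_atBot.comp
    apply Filter.Tendsto.atBot_div_const (by norm_num : (0:ℝ) < 2)
    exact tendsto_neg_atBot_iff.mpr (tendsto_pow_atTop (by norm_num))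
  have := integral_Ioi_of_hasDerivAt_of_tendsto
    (f := fun t => -gaussPdf t) (f' := fun t => t * gaussPdf t) (a := 3)
    (Continuous.continuousWithinAt (by unfold gaussPdf; fun_prop)) hderiv integrable_mul_gaussPdf.integrableOn htend
  rw [this]; unfold gaussPdf; norm_num

lemma exp_num : Real.exp (-(9:ℝ)/2) ≤ 0.0045 * Real.sqrt (2 * Real.pi) := by
  have hpi := Real.pi_gt_d6
  have hs : (2.506:ℝ) ≤ Real.sqrt (2 * Real.pi) := by
    rw [show (2.506:ℝ) = Real.sqrt (2.506^2) by rw [Real.sqrt_sq]; norm_num]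
    apply Real.sqrt_le_sqrt; nlinarith
  have he : (88.7:ℝ) ≤ Real.exp (9/2) := by
    have h9 : Real.exp (9:ℝ) = Real.exp (9/2) ^ 2 := by
      rw [← Real.exp_nat_mul]; norm_num
    have h1 : (2.7182818283:ℝ) < Real.exp 1 := Real.exp_one_gt_d9
    have h2 : Real.exp (9:ℝ) = Real.exp 1 ^ 9 := by
      rw [← Real.exp_nat_mul]; norm_num
    have h3 : (7867.69:ℝ) ≤ Real.exp 9 := by
      rw [h2]
      calc (7867.69:ℝ) ≤ 2.7182818283^9 := by norm_num
        _ ≤ Real.exp 1 ^ 9 := pow_le_pow_left₀ (by norm_num) h1.le 9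
    nlinarith [Real.exp_pos ((9:ℝ)/2)]
  have hneg : Real.exp (-(9:ℝ)/2) = (Real.exp (9/2))⁻¹ := by
    rw [← Real.exp_neg]; norm_num
  rw [hneg]
  have h1 : (Real.exp (9/2))⁻¹ ≤ (88.7:ℝ)⁻¹ := by
    apply inv_anti₀ (by norm_num) he
  calc (Real.exp (9/2))⁻¹ ≤ (88.7:ℝ)⁻¹ := h1
    _ ≤ 0.0045 * 2.506 := by norm_num
    _ ≤ 0.0045 * Real.sqrt (2 * Real.pi) := by nlinarith

lemma tail_le : ∫ t in Set.Ioi (3:ℝ), gaussPdf t ≤ 0.0015 := by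
  have step1 : ∫ t in Set.Ioi (3:ℝ), gaussPdf t ≤ ∫ t in Set.Ioi (3:ℝ), t/3 * gaussPdf t := by
    apply setIntegral_mono_on integrable_gaussPdf.integrableOn
      ((integrable_mul_gaussPdf.div_const 3).congr
        (Filter.Eventually.of_forall fun x => by ring)).integrableOn
      measurableSet_Ioi
    intro x hx
    have : (1:ℝ) ≤ x/3 := by simp at hx; linarith
    nlinarith [gaussPdf_nonneg x]
  have step2 : ∫ t in Set.Ioi (3:ℝ), t/3 * gaussPdf t
      = (1/3) * ((Real.sqrt (2 * Real.pi))⁻¹ * Real.exp (-(9:ℝ)/2)) := by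
    rw [← integral_mul_tail, ← integral_const_mul]
    apply integral_congr_ae (Filter.Eventually.of_forall fun x => by ring)
  rw [step2] at step1
  refine step1.trans ?_
  have hs : (0:ℝ) < Real.sqrt (2 * Real.pi) := by positivity
  have hinv : (Real.sqrt (2 * Real.pi))⁻¹ * Real.sqrt (2 * Real.pi) = 1 :=
    inv_mul_cancel₀ hs.ne'
  have he := exp_num
  have ha : (0:ℝ) ≤ (Real.sqrt (2 * Real.pi))⁻¹ := by positivity
  nlinarith [mul_le_mul_of_nonneg_left he ha]

lemma integral_gaussPdf : ∫ x, gaussPdf x = 1 := by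
  have h : ∫ x : ℝ, Real.exp (-(1/2) * x ^ 2) = Real.sqrt (Real.pi / (1/2)) :=
    integral_gaussian (1/2)
  have h2 : ∫ x, gaussPdf x = (Real.sqrt (2 * Real.pi))⁻¹ * ∫ x : ℝ, Real.exp (-(1/2) * x ^ 2) := by
    rw [← integral_const_mul]
    exact integral_congr_ae (Filter.Eventually.of_forall fun x => gaussPdf_eq x)
  rw [h2, h, show Real.pi / (1/2) = 2 * Real.pi by ring,
    inv_mul_cancel₀ (by positivity : Real.sqrt (2 * Real.pi) ≠ 0)]

lemma cdf_sub (a b : ℝ) : gaussCdf b - gaussCdf a = ∫ x in a..b, gaussPdf x :=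
  intervalIntegral.integral_Iic_sub_Iic integrable_gaussPdf.integrableOn
    integrable_gaussPdf.integrableOn

lemma cdf_cont : Continuous gaussCdf := by
  have h : Continuous (fun x => gaussCdf 0 + ∫ t in (0:ℝ)..x, gaussPdf t) :=
    continuous_const.add (integrable_gaussPdf.continuous_primitive 0)
  refine h.congr fun x => ?_
  rw [← cdf_sub]; ring

lemma cdf_neg3 : gaussCdf (-3) ≤ 0.0015 := by
  have h : ∫ x in Set.Ioi (3:ℝ), gaussPdf (-x) = ∫ x in Set.Iic (-3:ℝ), gaussPdf x :=
    integral_comp_neg_Ioi (3:ℝ) (f := gaussPdf)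
  have heven : ∀ x : ℝ, gaussPdf (-x) = gaussPdf x := by
    intro x; unfold gaussPdf; norm_num
  unfold gaussCdf
  rw [← h]
  simp_rw [heven]
  exact tail_le

lemma cdf_3 : 0.9985 ≤ gaussCdf 3 := by
  have h := intervalIntegral.integral_Iic_add_Ioi (b := (3:ℝ)) (μ := volume) (f := gaussPdf)
    integrable_gaussPdf.integrableOn integrable_gaussPdf.integrableOn
  rw [integral_gaussPdf] at h
  have := tail_le
  unfold gaussCdf
  linarith

lemma denom_lb {a b : ℝ} (ha : a ≤ -3) (hb : 3 ≤ b) :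
    0.997 ≤ gaussCdf b - gaussCdf a := by
  have h1 : gaussCdf b - gaussCdf a =
      (gaussCdf b - gaussCdf 3) + (gaussCdf 3 - gaussCdf (-3)) + (gaussCdf (-3) - gaussCdf a) := by
    ring
  have mono : ∀ u v : ℝ, u ≤ v → 0 ≤ gaussCdf v - gaussCdf u := by
    intro u v huv
    rw [cdf_sub, intervalIntegral.integral_of_le huv]
    exact setIntegral_nonneg measurableSet_Ioc fun x _ => gaussPdf_nonneg x
  have h2 := mono 3 b hb
  have h3 := mono a (-3) ha
  have := cdf_neg3
  have := cdf_3
  linarith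

lemma gaussPdf_sq (x : ℝ) : gaussPdf x ^ 2 = (2 * Real.pi)⁻¹ * Real.exp (-1 * x ^ 2) := by
  unfold gaussPdf
  have he : Real.exp (-(x^2)/2) ^ 2 = Real.exp (-1 * x^2) := by
    rw [← Real.exp_nat_mul]; congr 1; push_cast; ring
  rw [mul_pow, inv_pow, Real.sq_sqrt (by positivity : (0:ℝ) ≤ 2 * Real.pi), he]

lemma integrable_sq : Integrable (fun x => gaussPdf x ^ 2) := by
  have h := (integrable_exp_neg_mul_sq (by norm_num : (0:ℝ) < 1)).const_mul (2 * Real.pi)⁻¹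
  refine h.congr (Filter.Eventually.of_forall fun x => ?_)
  simp only [gaussPdf_sq]

lemma integral_sq : ∫ x, gaussPdf x ^ 2 = (2 * Real.pi)⁻¹ * Real.sqrt Real.pi := by
  have h : ∫ x : ℝ, Real.exp (-1 * x ^ 2) = Real.sqrt (Real.pi / 1) := integral_gaussian 1
  have h2 : ∫ x, gaussPdf x ^ 2 = (2 * Real.pi)⁻¹ * ∫ x : ℝ, Real.exp (-1 * x ^ 2) := by
    rw [← integral_const_mul]
    exact integral_congr_ae (Filter.Eventually.of_forall fun x => gaussPdf_sq x)
  rw [h2, h]; norm_num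

/-- For every `C ≥ 3`,
`∫_{0}^{C−3} (φ(x+C) − φ(x−C))² / (Φ(x+C) − Φ(x−C)) dx ≤ 1/(1.994·√π)`. -/
theorem integral_gauss_ratio_head_le (C : ℝ) (hC : 3 ≤ C) :
    ∫ x in (0:ℝ)..(C - 3), (gaussPdf (x + C) - gaussPdf (x - C)) ^ 2 /
      (gaussCdf (x + C) - gaussCdf (x - C)) ≤ 1 / (1.994 * Real.sqrt Real.pi) := by
  have hb : (0:ℝ) ≤ C - 3 := by linarith
  have gc : Continuous gaussPdf := by unfold gaussPdf; fun_prop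
  -- pointwise bound
  have hpt : ∀ x ∈ Set.Icc (0:ℝ) (C - 3),
      (gaussPdf (x + C) - gaussPdf (x - C)) ^ 2 / (gaussCdf (x + C) - gaussCdf (x - C))
        ≤ gaussPdf (x - C) ^ 2 / 0.997 := by
    intro x hx
    obtain ⟨hx0, hx1⟩ := hx
    have hD : 0.997 ≤ gaussCdf (x + C) - gaussCdf (x - C) :=
      denom_lb (by linarith) (by linarith)
    have hle : gaussPdf (x + C) ≤ gaussPdf (x - C) := by
      unfold gaussPdf
      apply mul_le_mul_of_nonneg_left _ (by positivity)
      apply Real.exp_le_exp.mpr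
      nlinarith
    have hN : (gaussPdf (x + C) - gaussPdf (x - C)) ^ 2 ≤ gaussPdf (x - C) ^ 2 := by
      nlinarith [gaussPdf_nonneg (x + C), gaussPdf_nonneg (x - C)]
    exact div_le_div₀ (by positivity) hN (by norm_num) hD
  -- interval integrability
  have hcontD : Continuous (fun x => gaussCdf (x + C) - gaussCdf (x - C)) := by
    exact (cdf_cont.comp (continuous_id.add continuous_const)).sub
      (cdf_cont.comp (continuous_id.sub continuous_const))
  have hf : IntervalIntegrable (fun x => (gaussPdf (x + C) - gaussPdf (x - C)) ^ 2 /
      (gaussCdf (x + C) - gaussCdf (x - C))) volume 0 (C - 3) := by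
    apply ContinuousOn.intervalIntegrable
    rw [Set.uIcc_of_le hb]
    apply ContinuousOn.div
    · exact (((gc.comp (continuous_id.add continuous_const)).sub
        (gc.comp (continuous_id.sub continuous_const))).pow 2).continuousOn
    · exact hcontD.continuousOn
    · intro x hx
      have := denom_lb (a := x - C) (b := x + C) (by obtain ⟨h1,h2⟩ := hx; linarith)
        (by obtain ⟨h1,h2⟩ := hx; linarith)
      intro h; rw [h] at this; norm_num at this
  have hg : IntervalIntegrable (fun x => gaussPdf (x - C) ^ 2 / 0.997) volume 0 (C - 3) := by
    apply Continuous.intervalIntegrable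
    exact ((gc.comp (continuous_id.sub continuous_const)).pow 2).div_const _
  have step1 := intervalIntegral.integral_mono_on hb hf hg hpt
  refine step1.trans ?_
  -- compute the RHS integral
  have step2 : ∫ x in (0:ℝ)..(C-3), gaussPdf (x - C) ^ 2 / 0.997
      = (∫ x in (-C:ℝ)..(-3), gaussPdf x ^ 2) / 0.997 := by
    rw [intervalIntegral.integral_div]
    congr 1
    have := intervalIntegral.integral_comp_sub_right (a := (0:ℝ)) (b := C - 3)
      (f := fun x => gaussPdf x ^ 2) C
    simpa using this
  rw [step2]
  have step3 : ∫ x in (-C:ℝ)..(-3), gaussPdf x ^ 2 ≤ (2 * Real.pi)⁻¹ * Real.sqrt Real.pi := by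
    rw [← integral_sq, intervalIntegral.integral_of_le (by linarith)]
    exact setIntegral_le_integral integrable_sq
      (Filter.Eventually.of_forall fun x => by positivity)
  have hpi := Real.pi_pos
  have hsq : Real.sqrt Real.pi * Real.sqrt Real.pi = Real.pi :=
    Real.mul_self_sqrt hpi.le
  have hs : 0 < Real.sqrt Real.pi := Real.sqrt_pos.mpr hpi
  have key : (2 * Real.pi)⁻¹ * Real.sqrt Real.pi / 0.997 = 1 / (1.994 * Real.sqrt Real.pi) := by
    field_simp
    nlinarith
  calc (∫ x in (-C:ℝ)..(-3), gaussPdf x ^ 2) / 0.997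
      ≤ ((2 * Real.pi)⁻¹ * Real.sqrt Real.pi) / 0.997 := by
        apply div_le_div_of_nonneg_right step3 (by norm_num)
    _ = 1 / (1.994 * Real.sqrt Real.pi) := key
end

section
/- (Risk bound for the vector of observed group-conditional means.) Consider the multi-source sampling model with a Markov kernel κ satisfying |μ_z| ≤ R and ∫ (y − μ_z)² d(κ z) ≤ σ² for every z ∈ Fin K, and a sampling plan n with total size N = ∑_m n_m ≥ 1. Then the vector estimator (Ȳ_z)_{z ∈ Fin K} satisfies E_D[ ∑_z (Ȳ_z − μ_z)² ] ≤ ∑_z ( σ²·E[1{n_z > 0}/n_z] + R²·P(n_z = 0) ). -/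
open MeasureTheory ProbabilityTheory

/-- The discrete measure on `Fin K` associated with a probability vector `w`. -/
noncomputable def discMeasure {K : ℕ} (w : Fin K → ℝ) : Measure (Fin K) :=
  ∑ z : Fin K, ENNReal.ofReal (w z) • Measure.dirac z

/-- The joint law of the dataset in the multi-source sampling model: observation `i`
is drawn independently, with group `Z ~ q_{src i}` and response `Y | Z = z ~ κ z`. -/
noncomputable def jointLaw {K M N : ℕ} (qsrc : Fin M → Fin K → ℝ)
    (κ : Kernel (Fin K) ℝ) (src : Fin N → Fin M) :
    Measure (Fin N → Fin K × ℝ) :=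
  Measure.pi fun i =>
    (discMeasure (qsrc (src i))).bind fun z => (κ z).map fun y => (z, y)

/-- The observed number of data points from group `z`. -/
def nObs {K N : ℕ} (z : Fin K) (D : Fin N → Fin K × ℝ) : ℕ :=
  (Finset.univ.filter fun i => (D i).1 = z).card

/-- The observed group-conditional mean (`0` if group `z` was not observed). -/
noncomputable def groupMean {K N : ℕ} (z : Fin K) (D : Fin N → Fin K × ℝ) : ℝ :=
  if nObs z D = 0 then 0
  else (∑ i ∈ Finset.univ.filter fun i => (D i).1 = z, (D i).2) / (nObs z D : ℝ)

/-! Given the vector `v` of group labels, the dataset is a product of the response laws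
`κ (v i)`, and the joint law is the finite mixture of these conditional laws. Under the
conditional law `nObs z` is a constant `m`: if `m > 0`, `Ȳ_z` is the mean of `m` independent
responses with mean `μ_z`, so its squared error has expectation `Var/m ≤ σ²/m`; if `m = 0`, the
error is `μ_z² ≤ R²`. Both sides of the bound are integrals against the mixture, so the
conditional inequalities integrate to the claim. -/

open scoped NNReal

namespace MeasureTheory

theorem Measure.pi_sum_smul {ι α β : Type*} [Fintype ι] [DecidableEq ι] [Fintype α]
    [MeasurableSpace β] (c : ι → α → ℝ≥0) (P : ι → α → Measure β)
    [∀ i a, IsFiniteMeasure (P i a)] :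
    Measure.pi (fun i => ∑ a, c i a • P i a)
      = ∑ v : ι → α, (∏ i, c i (v i)) • Measure.pi (fun i => P i (v i)) := by
  refine Measure.pi_eq fun s _ => ?_
  simp only [Measure.coe_finsetSum, Finset.sum_apply, Measure.smul_apply, Measure.pi_pi,
    nnreal_smul_coe_apply]
  rw [Finset.prod_univ_sum, Fintype.piFinset_univ]
  refine Finset.sum_congr rfl fun v _ => ?_
  rw [ENNReal.smul_def, smul_eq_mul, ENNReal.ofNNReal_finsetProd, Finset.prod_mul_distrib]

section Mixture

variable {ι α : Type*} [MeasurableSpace α] {s : Finset ι} {c : ι → ℝ≥0} {P : ι → Measure α}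
  {f g : α → ℝ}

theorem integrable_sum_smul_measure (hf : ∀ i ∈ s, Integrable f (P i)) :
    Integrable f (∑ i ∈ s, c i • P i) :=
  integrable_finsetSum_measure.2 fun i hi => (hf i hi).smul_measure_nnreal

theorem integral_sum_smul_measure_mono (hf : ∀ i ∈ s, Integrable f (P i))
    (hg : ∀ i ∈ s, Integrable g (P i)) (hfg : ∀ i ∈ s, ∫ x, f x ∂P i ≤ ∫ x, g x ∂P i) :
    ∫ x, f x ∂(∑ i ∈ s, c i • P i) ≤ ∫ x, g x ∂(∑ i ∈ s, c i • P i) := by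
  rw [integral_finsetSum_measure fun i hi => (hf i hi).smul_measure_nnreal,
    integral_finsetSum_measure fun i hi => (hg i hi).smul_measure_nnreal]
  refine Finset.sum_le_sum fun i hi => ?_
  simp only [integral_smul_nnreal_measure]
  exact smul_le_smul_of_nonneg_left (hfg i hi) (c i).2

end Mixture

end MeasureTheory

namespace ProbabilityTheory

theorem memLp_two_id_of_integrable_sub_sq {μ : Measure ℝ} [IsFiniteMeasure μ] {c : ℝ}
    (h : Integrable (fun y => (y - c) ^ 2) μ) : MemLp id 2 μ := by
  have hc : MemLp (fun y => y - c) 2 μ := (memLp_two_iff_integrable_sq (by fun_prop)).2 h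
  convert hc.add (memLp_const c) using 1
  ext y
  simp

section SampleMean

variable {ι : Type*} [Fintype ι] {μ : ι → Measure ℝ} [∀ i, IsProbabilityMeasure (μ i)]
  {S : Finset ι} {ν : Measure ℝ}

theorem integral_sum_eval_pi (hS : ∀ i ∈ S, μ i = ν) (hν : Integrable id ν) :
    ∫ ω, ∑ i ∈ S, ω i ∂Measure.pi μ = S.card * ∫ y, y ∂ν := by
  have heval : ∀ i ∈ S, ∫ ω, ω i ∂Measure.pi μ = ∫ y, y ∂ν := fun i hi => by
    rw [← hS i hi]
    exact integral_comp_eval (μ := μ) (f := id) aestronglyMeasurable_id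
  rw [integral_finsetSum _ fun i hi => ?_]
  · rw [Finset.sum_congr rfl heval]
    simp
  · exact (measurePreserving_eval μ i).integrable_comp_of_integrable (hS i hi ▸ hν)

theorem variance_sum_eval_pi (hS : ∀ i ∈ S, μ i = ν) (hν : MemLp id 2 ν) :
    Var[fun ω => ∑ i ∈ S, ω i; Measure.pi μ] = S.card * Var[id; ν] := by
  have hmem : ∀ i ∈ S, MemLp (fun ω : ι → ℝ => ω i) 2 (Measure.pi μ) := fun i hi =>
    (hS i hi ▸ hν).comp_measurePreserving (measurePreserving_eval μ i)
  have hindep : (S : Set ι).Pairwise fun i j =>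
      (fun ω : ι → ℝ => ω i) ⟂ᵢ[Measure.pi μ] fun ω => ω j := fun i _ j _ hij =>
    (iIndepFun_pi (X := fun _ => id) fun _ => aemeasurable_id).indepFun hij
  have hsum := IndepFun.variance_sum hmem hindep
  simp only [Finset.sum_fn] at hsum
  have heval : ∀ i ∈ S, Var[fun ω => ω i; Measure.pi μ] = Var[id; ν] := fun i hi => by
    rw [← hS i hi]
    exact (measurePreserving_eval μ i).variance_fun_comp (f := id) aemeasurable_id
  rw [hsum, Finset.sum_congr rfl heval]
  simp

theorem integral_sampleMean_sub_sq_pi (hS : ∀ i ∈ S, μ i = ν) (hSne : S.Nonempty)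
    (hν : MemLp id 2 ν) :
    Integrable (fun ω => ((∑ i ∈ S, ω i) / S.card - ∫ y, y ∂ν) ^ 2) (Measure.pi μ) ∧
      ∫ ω, ((∑ i ∈ S, ω i) / S.card - ∫ y, y ∂ν) ^ 2 ∂Measure.pi μ = Var[id; ν] / S.card := by
  obtain ⟨j, hj⟩ := hSne
  have hν_prob : IsProbabilityMeasure ν := hS j hj ▸ inferInstance
  have hcard : (S.card : ℝ) ≠ 0 := by simp [Finset.ne_empty_of_mem hj]
  have hsum : MemLp (fun ω : ι → ℝ => ∑ i ∈ S, ω i) 2 (Measure.pi μ) :=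
    memLp_finsetSum S fun i hi =>
      (hS i hi ▸ hν).comp_measurePreserving (measurePreserving_eval μ i)
  have hsampleMean : MemLp (fun ω : ι → ℝ => (∑ i ∈ S, ω i) / S.card) 2 (Measure.pi μ) := by
    simpa only [div_eq_mul_inv] using hsum.mul_const (S.card : ℝ)⁻¹
  have hmean : ∫ ω, (∑ i ∈ S, ω i) / S.card ∂Measure.pi μ = ∫ y, y ∂ν := by
    rw [integral_div, integral_sum_eval_pi hS (hν.integrable one_le_two)]
    field_simp
  constructor
  · exact (hsampleMean.sub (memLp_const _)).integrable_sq
  · rw [← hmean, ← variance_eq_integral hsampleMean.aemeasurable]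
    simp_rw [div_eq_inv_mul, variance_const_mul, variance_sum_eval_pi hS hν]
    field_simp

end SampleMean

end ProbabilityTheory

theorem discMeasure_bind {K : ℕ} {β : Type*} [MeasurableSpace β] (w : Fin K → ℝ)
    (P : Fin K → Measure β) :
    (discMeasure w).bind P = ∑ z, (w z).toNNReal • P z := by
  ext s hs
  rw [Measure.bind_apply hs Measurable.of_discrete.aemeasurable, discMeasure,
    lintegral_finsetSum_measure]
  simp only [lintegral_smul_measure, lintegral_dirac, Measure.coe_finsetSum, Finset.sum_apply,
    Measure.smul_apply, Measure.nnreal_smul_coe_apply, smul_eq_mul]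
  rfl

section Model

variable {K N : ℕ}

def withLabels (v : Fin N → Fin K) (Y : Fin N → ℝ) : Fin N → Fin K × ℝ :=
  fun i => (v i, Y i)

theorem measurableEmbedding_withLabels (v : Fin N → Fin K) :
    MeasurableEmbedding (withLabels v) := by
  have hrange : Set.range (withLabels v) = ⋂ i, {D | (D i).1 = v i} := by
    ext D
    simp only [Set.mem_range, Set.mem_iInter, Set.mem_ofPred_eq]
    constructor
    · rintro ⟨Y, rfl⟩ i
      rfl
    · exact fun h => ⟨fun i => (D i).2, funext fun i => Prod.ext (h i).symm rfl⟩
  refine .of_measurable_inverse (g := fun D i => (D i).2) (by unfold withLabels; fun_prop) ?_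
    (by fun_prop) fun Y => rfl
  rw [hrange]
  exact .iInter fun i => (measurable_pi_apply i).fst (measurableSet_singleton (v i))

noncomputable def condLaw (κ : Kernel (Fin K) ℝ) (v : Fin N → Fin K) :
    Measure (Fin N → Fin K × ℝ) :=
  (Measure.pi fun i => κ (v i)).map (withLabels v)

theorem jointLaw_eq_sum_condLaw {M : ℕ} (qsrc : Fin M → Fin K → ℝ) (κ : Kernel (Fin K) ℝ)
    [IsFiniteKernel κ] (src : Fin N → Fin M) :
    jointLaw qsrc κ src =
      ∑ v : Fin N → Fin K, (∏ i, (qsrc (src i) (v i)).toNNReal) • condLaw κ v := by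
  simp only [jointLaw, discMeasure_bind]
  rw [Measure.pi_sum_smul]
  refine Finset.sum_congr rfl fun v _ => ?_
  rw [condLaw]
  congr 1
  exact (Measure.pi_map_pi (μ := fun i => κ (v i)) (f := fun i y => (v i, y))
    fun i => by fun_prop).symm

theorem measurable_nObs (z : Fin K) : Measurable (nObs z : (Fin N → Fin K × ℝ) → ℕ) := by
  have h : (nObs z : (Fin N → Fin K × ℝ) → ℕ) = fun D => ∑ i, if (D i).1 = z then 1 else 0 := by
    funext D
    rw [nObs, Finset.card_filter]
  rw [h]
  exact Finset.measurable_sum _ fun i _ =>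
    .ite ((measurable_pi_apply i).fst (measurableSet_singleton z)) measurable_const
      measurable_const

theorem nObs_withLabels (z : Fin K) (v : Fin N → Fin K) (Y : Fin N → ℝ) :
    nObs z (withLabels v Y) = (Finset.univ.filter fun i => v i = z).card :=
  rfl

theorem integral_ite_nObs_eq_zero (z : Fin K) (μ : Measure (Fin N → Fin K × ℝ)) :
    ∫ D, (if nObs z D = 0 then 1 else 0) ∂μ = (μ {D | nObs z D = 0}).toReal := by
  have h : (fun D => if nObs z D = 0 then (1 : ℝ) else 0) =
      Set.indicator {D : Fin N → Fin K × ℝ | nObs z D = 0} 1 := by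
    ext D
    simp [Set.indicator_apply]
  rw [h]
  exact integral_indicator_one (measurable_nObs z (measurableSet_singleton 0))

variable (κ : Kernel (Fin K) ℝ) [IsMarkovKernel κ] (z : Fin K) (v : Fin N → Fin K)

theorem integral_comp_nObs_condLaw (h : ℕ → ℝ) :
    Integrable (fun D => h (nObs z D)) (condLaw κ v) ∧
      ∫ D, h (nObs z D) ∂condLaw κ v = h (Finset.univ.filter fun i => v i = z).card := by
  rw [condLaw, (measurableEmbedding_withLabels v).integrable_map_iff,
    (measurableEmbedding_withLabels v).integral_map]
  simp only [Function.comp_def, nObs_withLabels, integral_const, probReal_univ, one_smul]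
  exact ⟨integrable_const _, trivial⟩

theorem integral_groupMean_sub_sq_condLaw
    (hvar_int : Integrable (fun y => (y - ∫ y', y' ∂(κ z)) ^ 2) (κ z)) :
    Integrable (fun D => (groupMean z D - ∫ y, y ∂(κ z)) ^ 2) (condLaw κ v) ∧
      ∫ D, (groupMean z D - ∫ y, y ∂(κ z)) ^ 2 ∂condLaw κ v =
        if (Finset.univ.filter fun i => v i = z).card = 0 then (∫ y, y ∂(κ z)) ^ 2
        else Var[id; κ z] / (Finset.univ.filter fun i => v i = z).card := by
  set S := Finset.univ.filter fun i => v i = z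
  rw [condLaw, (measurableEmbedding_withLabels v).integrable_map_iff,
    (measurableEmbedding_withLabels v).integral_map]
  by_cases hS : S.card = 0
  · have hcomp : ∀ Y, groupMean z (withLabels v Y) = 0 := fun Y => if_pos hS
    simp [Function.comp_def, hcomp, hS]
  · have hcomp : ∀ Y, groupMean z (withLabels v Y) = (∑ i ∈ S, Y i) / S.card :=
      fun Y => if_neg hS
    simp only [Function.comp_def, hcomp, if_neg hS]
    exact integral_sampleMean_sub_sq_pi (fun i hi => congrArg κ (Finset.mem_filter.1 hi).2)
      (Finset.card_ne_zero.1 hS) (memLp_two_id_of_integrable_sub_sq hvar_int)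

theorem integral_groupMean_sub_sq_condLaw_le {σ R : ℝ} (hmean : |∫ y, y ∂(κ z)| ≤ R)
    (hvar_int : Integrable (fun y => (y - ∫ y', y' ∂(κ z)) ^ 2) (κ z))
    (hvar : ∫ y, (y - ∫ y', y' ∂(κ z)) ^ 2 ∂(κ z) ≤ σ ^ 2) :
    ∫ D, (groupMean z D - ∫ y, y ∂(κ z)) ^ 2 ∂condLaw κ v ≤
      σ ^ 2 * (if 0 < (Finset.univ.filter fun i => v i = z).card
        then 1 / ((Finset.univ.filter fun i => v i = z).card : ℝ) else 0) +
      R ^ 2 * (if (Finset.univ.filter fun i => v i = z).card = 0 then 1 else 0) := by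
  rw [(integral_groupMean_sub_sq_condLaw κ z v hvar_int).2]
  by_cases hS : (Finset.univ.filter fun i => v i = z).card = 0
  · simp only [hS, if_true, lt_irrefl, if_false, mul_zero, mul_one, zero_add]
    rw [← sq_abs]
    exact pow_le_pow_left₀ (abs_nonneg _) hmean 2
  · have hvar' : Var[id; κ z] ≤ σ ^ 2 :=
      (variance_eq_integral measurable_id.aemeasurable).trans_le hvar
    simp only [hS, if_false, Nat.pos_of_ne_zero hS, if_true, mul_zero, add_zero, mul_one_div]
    exact div_le_div_of_nonneg_right hvar' (Nat.cast_nonneg _)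

end Model

theorem group_means_risk_bound_general
    {K M N : ℕ} (σ R : ℝ)
    (qsrc : Fin M → Fin K → ℝ)
    (src : Fin N → Fin M)
    (κ : Kernel (Fin K) ℝ) (hκ : IsMarkovKernel κ)
    (hmean : ∀ z, |∫ y, y ∂(κ z)| ≤ R)
    (hvar_int : ∀ z, Integrable (fun y => (y - ∫ y', y' ∂(κ z)) ^ 2) (κ z))
    (hvar : ∀ z, ∫ y, (y - ∫ y', y' ∂(κ z)) ^ 2 ∂(κ z) ≤ σ ^ 2) :
    ∫ D, (∑ z, (groupMean z D - ∫ y, y ∂(κ z)) ^ 2) ∂(jointLaw qsrc κ src) ≤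
      ∑ z, (σ ^ 2 * (∫ D, (if 0 < nObs z D then 1 / (nObs z D : ℝ) else 0)
            ∂(jointLaw qsrc κ src))
        + R ^ 2 * (jointLaw qsrc κ src {D | nObs z D = 0}).toReal) := by
  have hJ := jointLaw_eq_sum_condLaw qsrc κ src
  have hF z (v : Fin N → Fin K) := integral_groupMean_sub_sq_condLaw κ z v (hvar_int z)
  have hnObs z (v : Fin N → Fin K) (h : ℕ → ℝ) := integral_comp_nObs_condLaw κ z v h
  have hint z (h : ℕ → ℝ) : Integrable (fun D => h (nObs z D)) (jointLaw qsrc κ src) := by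
    rw [hJ]
    exact integrable_sum_smul_measure fun v _ => (hnObs z v h).1
  let bound (k : ℕ) : ℝ :=
    σ ^ 2 * (if 0 < k then 1 / (k : ℝ) else 0) + R ^ 2 * (if k = 0 then 1 else 0)
  calc ∫ D, (∑ z, (groupMean z D - ∫ y, y ∂(κ z)) ^ 2) ∂(jointLaw qsrc κ src)
      = ∑ z, ∫ D, (groupMean z D - ∫ y, y ∂(κ z)) ^ 2 ∂(jointLaw qsrc κ src) := by
        refine integral_finsetSum _ fun z _ => ?_
        rw [hJ]
        exact integrable_sum_smul_measure fun v _ => (hF z v).1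
    _ ≤ ∑ z, ∫ D, bound (nObs z D) ∂(jointLaw qsrc κ src) := by
        refine Finset.sum_le_sum fun z _ => ?_
        rw [hJ]
        refine integral_sum_smul_measure_mono (fun v _ => (hF z v).1)
          (fun v _ => (hnObs z v _).1) fun v _ => ?_
        rw [(hnObs z v bound).2]
        exact integral_groupMean_sub_sq_condLaw_le κ z v (hmean z) (hvar_int z) (hvar z)
    _ = _ := by
        refine Finset.sum_congr rfl fun z _ => ?_
        have hG := hint z fun k => if 0 < k then 1 / (k : ℝ) else 0
        have hI := hint z fun k => if k = 0 then 1 else 0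
        rw [integral_add (hG.const_mul _) (hI.const_mul _), integral_const_mul,
          integral_const_mul, integral_ite_nObs_eq_zero]

/-- Risk bound for the vector of observed group-conditional means
`(Ȳ_z)_z` as an estimator of the vector of conditional means `(μ_z)_z`. -/
theorem group_means_risk_bound
    {K M N : ℕ} (hK : 1 ≤ K) (hM : 1 ≤ M) (σ R : ℝ)
    (qsrc : Fin M → Fin K → ℝ)
    (hqsrc : ∀ m, (∀ z, 0 ≤ qsrc m z) ∧ ∑ z, qsrc m z = 1)
    (qT : Fin K → ℝ) (hqT : (∀ z, 0 ≤ qT z) ∧ ∑ z, qT z = 1)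
    (n : Fin M → ℕ) (hN : N = ∑ m, n m) (hNpos : 1 ≤ N)
    (src : Fin N → Fin M)
    (hsrc : ∀ m, (Finset.univ.filter fun i => src i = m).card = n m)
    (κ : Kernel (Fin K) ℝ) (hκ : IsMarkovKernel κ)
    (hmean_int : ∀ z, Integrable (fun y => y) (κ z))
    (hmean : ∀ z, |∫ y, y ∂(κ z)| ≤ R)
    (hvar_int : ∀ z, Integrable (fun y => (y - ∫ y', y' ∂(κ z)) ^ 2) (κ z))
    (hvar : ∀ z, ∫ y, (y - ∫ y', y' ∂(κ z)) ^ 2 ∂(κ z) ≤ σ ^ 2) :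
    ∫ D, (∑ z, (groupMean z D - ∫ y, y ∂(κ z)) ^ 2) ∂(jointLaw qsrc κ src) ≤
      ∑ z, (σ ^ 2 * (∫ D, (if 0 < nObs z D then 1 / (nObs z D : ℝ) else 0)
            ∂(jointLaw qsrc κ src))
        + R ^ 2 * (jointLaw qsrc κ src {D | nObs z D = 0}).toReal) :=
  group_means_risk_bound_general σ R qsrc src κ hκ hmean hvar_int hvar
end
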